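/- Let n ≥ 1, p ∈ (0,∞) with p ≠ 2, and let U ∈ Mₙ(ℂ) be a unitary matrix. Then ‖I − U‖_p^p + ‖I + U‖_p^p = 2^p if and only if U = Uᴴ. -/

import Mathlib

/-!
Put `H = U + Uᴴ`. Since `U` is unitary, `(1 ∓ U)ᴴ (1 ∓ U) = 2 ∓ H`, so if `μᵢ` are the eigenvalues
of `H` then `‖1 ∓ U‖_p^p = τ((2 ∓ H)^{p/2}) = (1/n) ∑ᵢ (2 ∓ μᵢ)^{p/2}`, with `2 ∓ μᵢ ≥ 0`, while
`2^p = (1/n) ∑ᵢ ((2 - μᵢ) + (2 + μᵢ))^{p/2}`. For `q = p/2 ≠ 1`, `t ↦ t^q` is strictly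
sub- or superadditive on `[0, ∞)`, with one sign for all `i`, so equality holds iff every pair
`2 - μᵢ, 2 + μᵢ` contains a zero, i.e. iff `(2 - H)(2 + H) = 0`. Finally
`(2 - H)(2 + H) = (U - Uᴴ)ᴴ (U - Uᴴ)`, which vanishes iff `U = Uᴴ`.
-/

open Matrix
open scoped ComplexOrder

/-- The normalized trace `L^p`-(quasi-)norm `(τ(|A|^p))^{1/p}` of a complex matrix,
computed via the eigenvalues of `Aᴴ * A`: the eigenvalues of `|A|^p` are the
`(p/2)`-th powers of those of `Aᴴ * A`, and the trace of a Hermitian matrix is the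
sum of its eigenvalues. -/
noncomputable def lpnorm {m : Type*} [Fintype m] [DecidableEq m] (p : ℝ)
    (A : Matrix m m ℂ) : ℝ :=
  ((∑ i, ((Matrix.posSemidef_conjTranspose_mul_self A).isHermitian.eigenvalues i) ^ (p / 2)) /
      (Fintype.card m : ℝ)) ^ (1 / p)

/-- The `ℓ² → ℓ²` operator norm of a complex matrix. -/
noncomputable def l2opNorm {m : Type*} [Fintype m] [DecidableEq m]
    (A : Matrix m m ℂ) : ℝ :=
  ‖Matrix.toEuclideanCLM (𝕜 := ℂ) A‖

namespace Real

variable {a b q : ℝ}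

lemma mul_rpow_sub_one {x : ℝ} (hx : x ≠ 0) (y : ℝ) : x * x ^ (y - 1) = x ^ y := by
  rw [rpow_sub_one hx, mul_div_cancel₀ _ hx]

lemma add_rpow_lt_rpow_add (ha : 0 < a) (hb : 0 < b) (hq : 1 < q) :
    a ^ q + b ^ q < (a + b) ^ q := by
  have hlt {x : ℝ} (hx : 0 < x) (hxab : x < a + b) : x ^ q < x * (a + b) ^ (q - 1) := by
    rw [← mul_rpow_sub_one hx.ne']
    exact mul_lt_mul_of_pos_left (rpow_lt_rpow hx.le hxab (by linarith)) hx
  calc a ^ q + b ^ q < a * (a + b) ^ (q - 1) + b * (a + b) ^ (q - 1) :=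
        add_lt_add (hlt ha (by linarith)) (hlt hb (by linarith))
    _ = (a + b) ^ q := by rw [← add_mul, mul_rpow_sub_one (by positivity)]

lemma rpow_add_lt_add_rpow (ha : 0 < a) (hb : 0 < b) (hq : q < 1) :
    (a + b) ^ q < a ^ q + b ^ q := by
  have hlt {x : ℝ} (hx : 0 < x) (hxab : x < a + b) : x * (a + b) ^ (q - 1) < x ^ q := by
    rw [← mul_rpow_sub_one hx.ne']
    exact mul_lt_mul_of_pos_left (rpow_lt_rpow_of_neg hx hxab (by linarith)) hx
  calc (a + b) ^ q = a * (a + b) ^ (q - 1) + b * (a + b) ^ (q - 1) := by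
        rw [← add_mul, mul_rpow_sub_one (by positivity)]
    _ < a ^ q + b ^ q := add_lt_add (hlt ha (by linarith)) (hlt hb (by linarith))

lemma add_rpow_eq_rpow_add_iff (ha : 0 ≤ a) (hb : 0 ≤ b) (hq : 0 < q) (hq1 : q ≠ 1) :
    a ^ q + b ^ q = (a + b) ^ q ↔ a = 0 ∨ b = 0 := by
  refine ⟨fun h => ?_, ?_⟩
  · by_contra! hab
    have ha' : 0 < a := ha.lt_of_ne' hab.1
    have hb' : 0 < b := hb.lt_of_ne' hab.2
    rcases hq1.lt_or_gt with hq1 | hq1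
    · exact (rpow_add_lt_add_rpow ha' hb' hq1).ne' h
    · exact (add_rpow_lt_rpow_add ha' hb' hq1).ne h
  · rintro (rfl | rfl) <;> simp [zero_rpow hq.ne']

end Real

namespace Finset

lemma sum_add_rpow_eq_sum_rpow_add_iff {ι : Type*} {s : Finset ι} {a b : ι → ℝ} {q : ℝ}
    (ha : ∀ i ∈ s, 0 ≤ a i) (hb : ∀ i ∈ s, 0 ≤ b i) (hq : 0 < q) (hq1 : q ≠ 1) :
    ∑ i ∈ s, (a i ^ q + b i ^ q) = ∑ i ∈ s, (a i + b i) ^ q ↔ ∀ i ∈ s, a i = 0 ∨ b i = 0 := by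
  have termwise : (∀ i ∈ s, a i ^ q + b i ^ q = (a i + b i) ^ q) ↔ ∀ i ∈ s, a i = 0 ∨ b i = 0 :=
    forall₂_congr fun i hi => Real.add_rpow_eq_rpow_add_iff (ha i hi) (hb i hi) hq hq1
  rw [← termwise]
  rcases hq1.lt_or_gt with hq1 | hq1
  · rw [eq_comm, sum_eq_sum_iff_of_le fun i hi =>
      Real.rpow_add_le_add_rpow (ha i hi) (hb i hi) hq.le hq1.le]
    exact forall₂_congr fun _ _ => eq_comm
  · exact sum_eq_sum_iff_of_le fun i hi => Real.add_rpow_le_rpow_add (ha i hi) (hb i hi) hq1.le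

end Finset

namespace Matrix

variable {n : Type*} [Fintype n] [DecidableEq n]

namespace IsHermitian

variable {𝕜 : Type*} [RCLike 𝕜] {A B : Matrix n n 𝕜}

lemma map_eigenvalues_of_eq_cfc (hA : A.IsHermitian) (hB : B.IsHermitian) {f : ℝ → ℝ}
    (hBA : B = cfc f A) :
    Finset.univ.val.map hB.eigenvalues = Finset.univ.val.map (f ∘ hA.eigenvalues) := by
  have hroots := congrArg Polynomial.roots (hBA ▸ hA.charpoly_cfc_eq f)
  rw [hB.roots_charpoly_eq_eigenvalues, Polynomial.roots_prod _ _ (by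
    simp [Finset.prod_ne_zero_iff, Polynomial.X_sub_C_ne_zero])] at hroots
  apply Multiset.map_injective (RCLike.ofReal_injective (K := 𝕜))
  simpa [Multiset.map_map] using hroots

lemma sum_eigenvalues_of_eq_cfc (hA : A.IsHermitian) (hB : B.IsHermitian) {f : ℝ → ℝ}
    (hBA : B = cfc f A) (g : ℝ → ℝ) :
    ∑ i, g (hB.eigenvalues i) = ∑ i, g (f (hA.eigenvalues i)) := by
  simpa [Multiset.map_map] using
    congrArg (fun s => (s.map g).sum) (map_eigenvalues_of_eq_cfc hA hB hBA)

lemma cfc_eq_zero_iff (hA : A.IsHermitian) (f : ℝ → ℝ) :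
    cfc f A = 0 ↔ ∀ i, f (hA.eigenvalues i) = 0 := by
  rw [← cfc_zero ℝ A, cfc_eq_cfc_iff_eqOn (hf := A.finite_real_spectrum.continuousOn f),
    hA.spectrum_real_eq_range_eigenvalues]
  simp [Set.EqOn]

open scoped MatrixOrder in
lemma nonneg_of_cfc_posSemidef (hA : A.IsHermitian) {f : ℝ → ℝ} (hf : (cfc f A).PosSemidef)
    (i : n) : 0 ≤ f (hA.eigenvalues i) :=
  (cfc_nonneg_iff f A (A.finite_real_spectrum.continuousOn f)).mp (nonneg_iff_posSemidef.mpr hf)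
    _ (hA.eigenvalues_mem_spectrum_real i)

end IsHermitian

variable {U : Matrix n n ℂ}

lemma conjTranspose_one_sub_mul_one_sub (hU : U ∈ unitaryGroup n ℂ) :
    (1 - U)ᴴ * (1 - U) = cfc (fun x : ℝ => 2 - x) (U + Uᴴ) := by
  have : IsSelfAdjoint (U + Uᴴ) := .add_star_self U
  have hU₁ : Uᴴ * U = 1 := hU.1
  rw [cfc_sub .., cfc_const .., cfc_id' .., map_ofNat]
  calc (1 - U)ᴴ * (1 - U) = 1 + Uᴴ * U - (U + Uᴴ) := by
        rw [conjTranspose_sub, conjTranspose_one]; noncomm_ring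
    _ = 2 - (U + Uᴴ) := by rw [hU₁, one_add_one_eq_two]

lemma conjTranspose_one_add_mul_one_add (hU : U ∈ unitaryGroup n ℂ) :
    (1 + U)ᴴ * (1 + U) = cfc (fun x : ℝ => 2 + x) (U + Uᴴ) := by
  have : IsSelfAdjoint (U + Uᴴ) := .add_star_self U
  have hU₁ : Uᴴ * U = 1 := hU.1
  rw [cfc_add .., cfc_const .., cfc_id' .., map_ofNat]
  calc (1 + U)ᴴ * (1 + U) = 1 + Uᴴ * U + (U + Uᴴ) := by
        rw [conjTranspose_add, conjTranspose_one]; noncomm_ring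
    _ = 2 + (U + Uᴴ) := by rw [hU₁, one_add_one_eq_two]

lemma conjTranspose_sub_mul_sub (hU : U ∈ unitaryGroup n ℂ) :
    (U - Uᴴ)ᴴ * (U - Uᴴ) = cfc (fun x : ℝ => (2 - x) * (2 + x)) (U + Uᴴ) := by
  have : IsSelfAdjoint (U + Uᴴ) := .add_star_self U
  have hU₁ : Uᴴ * U = 1 := hU.1
  have hU₂ : U * Uᴴ = 1 := hU.2
  rw [cfc_mul .., cfc_sub .., cfc_add .., cfc_const .., cfc_id' .., map_ofNat]
  calc (U - Uᴴ)ᴴ * (U - Uᴴ) = 2 * (Uᴴ * U) + 2 * (U * Uᴴ) - (U + Uᴴ) * (U + Uᴴ) := by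
        rw [conjTranspose_sub, conjTranspose_conjTranspose]; noncomm_ring
    _ = (2 - (U + Uᴴ)) * (2 + (U + Uᴴ)) := by
        rw [hU₁, hU₂, ← one_add_one_eq_two]; noncomm_ring

end Matrix

lemma lpnorm_rpow_of_conjTranspose_mul_self_eq_cfc {m : Type*} [Fintype m] [DecidableEq m]
    {p : ℝ} (hp : p ≠ 0) {A H : Matrix m m ℂ} (hH : H.IsHermitian) {f : ℝ → ℝ}
    (hA : Aᴴ * A = cfc f H) :
    lpnorm p A ^ p = (∑ i, f (hH.eigenvalues i) ^ (p / 2)) / Fintype.card m := by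
  have hnonneg := (posSemidef_conjTranspose_mul_self A).eigenvalues_nonneg
  rw [lpnorm, ← Real.rpow_mul (div_nonneg (Finset.sum_nonneg fun i _ =>
    Real.rpow_nonneg (hnonneg i) _) (Nat.cast_nonneg _)), one_div_mul_cancel hp, Real.rpow_one]
  exact congrArg (· / _) (hH.sum_eigenvalues_of_eq_cfc _ hA (· ^ (p / 2)))

/-- For `p ≠ 2` and unitary `U`: `‖I − U‖_p^p + ‖I + U‖_p^p = 2^p` iff `U = Uᴴ`. -/
theorem stmt4 (n : ℕ) (hn : 1 ≤ n) (p : ℝ) (hp : 0 < p) (hp2 : p ≠ 2)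
    (U : Matrix (Fin n) (Fin n) ℂ) (hU : U ∈ Matrix.unitaryGroup (Fin n) ℂ) :
    lpnorm p (1 - U) ^ p + lpnorm p (1 + U) ^ p = (2 : ℝ) ^ p ↔ Uᴴ = U := by
  have hH : (U + Uᴴ).IsHermitian := IsSelfAdjoint.add_star_self U
  set μ := hH.eigenvalues
  have hsub := conjTranspose_one_sub_mul_one_sub hU
  have hadd := conjTranspose_one_add_mul_one_add hU
  have hsub_nonneg := hH.nonneg_of_cfc_posSemidef (hsub ▸ posSemidef_conjTranspose_mul_self _)
  have hadd_nonneg := hH.nonneg_of_cfc_posSemidef (hadd ▸ posSemidef_conjTranspose_mul_self _)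
  have hn0 : (n : ℝ) ≠ 0 := Nat.cast_ne_zero.mpr (by omega)
  have h2p : (2 : ℝ) ^ p = (∑ i, ((2 - μ i) + (2 + μ i)) ^ (p / 2)) / n := by
    have h4 : (4 : ℝ) ^ (p / 2) = 2 ^ p := by
      rw [show (4 : ℝ) = 2 ^ (2 : ℝ) by norm_num, ← Real.rpow_mul zero_le_two]; ring_nf
    simp [show ∀ x : ℝ, 2 - x + (2 + x) = 4 by intro; ring, h4, mul_div_cancel_left₀ _ hn0]
  rw [lpnorm_rpow_of_conjTranspose_mul_self_eq_cfc hp.ne' hH hsub,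
    lpnorm_rpow_of_conjTranspose_mul_self_eq_cfc hp.ne' hH hadd, h2p, Fintype.card_fin,
    ← add_div, div_left_inj' hn0, ← Finset.sum_add_distrib,
    Finset.sum_add_rpow_eq_sum_rpow_add_iff (fun i _ => hsub_nonneg i)
      (fun i _ => hadd_nonneg i) (by positivity) (by contrapose! hp2; linarith)]
  simp only [Finset.mem_univ, true_implies, ← mul_eq_zero]
  rw [← hH.cfc_eq_zero_iff (fun x => (2 - x) * (2 + x)), ← conjTranspose_sub_mul_sub hU,
    conjTranspose_mul_self_eq_zero, sub_eq_zero, eq_comm]
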